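/- Let n ≥ 1, m ≥ 1, and let c : S^m → ℝ^{m+1} be the inclusion of the unit sphere (so ∑_k c_k(u)² = 1 for all u). Suppose L ⊂ ℝ × ℝ^{2n+1} is a submanifold parameterized by an embedding f_L(p) = (t(p), x₁(p), y₁(p), …, x_n(p), y_n(p), z(p)) with x₁(p) > 0 for all p, and f_L pulls back the 2-form d(e^t(dz − ∑_{i=1}^n y_i dx_i)) to zero. Then the map F(p,u) = (t(p), x₁(p)c₀(u), y₁(p)c₀(u), …, x₁(p)c_m(u), y₁(p)c_m(u), x₂(p), y₂(p), …, z(p)) pulls back the 2-form d(e^t(dz − ∑ ỹ dx̃)) on ℝ × ℝ^{2(n+m)+1} (sum over all n+m pairs of coordinates) to zero. -/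

import Mathlib

/-- The `j`-th coordinate projection on `ℝ × ℝ^N` (onto the second factor's coordinates),
as a continuous linear functional. -/
noncomputable def coordProj (N : ℕ) (j : Fin N) : (ℝ × (Fin N → ℝ)) →L[ℝ] ℝ :=
  (ContinuousLinearMap.proj j).comp (ContinuousLinearMap.snd ℝ ℝ (Fin N → ℝ))

/-- The `t`-coordinate on `ℝ × ℝ^N`. -/
noncomputable def tProj (N : ℕ) : (ℝ × (Fin N → ℝ)) →L[ℝ] ℝ :=
  ContinuousLinearMap.fst ℝ ℝ (Fin N → ℝ)

/-- The 1-form `e^t (dz − ∑_{i=1}^n y_i dx_i)` on the symplectization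
`ℝ × ℝ^{2n+1}`, in coordinates where `x_i` sits at index `2i`, `y_i` at index `2i+1`
(for `0 ≤ i < n`) and `z` at index `2n`; its differential is the symplectic form. -/
noncomputable def symplPrimitive (n : ℕ) (q : ℝ × (Fin (2 * n + 1) → ℝ)) :
    (ℝ × (Fin (2 * n + 1) → ℝ)) →L[ℝ] ℝ :=
  Real.exp q.1 •
    (coordProj (2 * n + 1) ⟨2 * n, by omega⟩ -
      ∑ i : Fin n, q.2 ⟨2 * (i : ℕ) + 1, by have := i.isLt; omega⟩ •
        coordProj (2 * n + 1) ⟨2 * (i : ℕ), by have := i.isLt; omega⟩)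

/-- The pullback of a 1-form `ω` on `ℝ × ℝ^N` along a map `f : P → ℝ × ℝ^N`. -/
noncomputable def pullbackOneForm {P : Type} [NormedAddCommGroup P] [NormedSpace ℝ P]
    {N : ℕ} (f : P → ℝ × (Fin N → ℝ))
    (ω : (ℝ × (Fin N → ℝ)) → (ℝ × (Fin N → ℝ)) →L[ℝ] ℝ) (p : P) : P →L[ℝ] ℝ :=
  (ω (f p)).comp (fderiv ℝ f p)

/-- A 1-form `λ` on a normed space has vanishing exterior derivative:
`dλ(v, w) = D_v(λ(w)) − D_w(λ(v)) = 0` for all constant vector fields `v`, `w`. -/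
def HasZeroExtDeriv {P : Type} [NormedAddCommGroup P] [NormedSpace ℝ P]
    (lam : P → P →L[ℝ] ℝ) : Prop :=
  ∀ p v w, fderiv ℝ (fun q => lam q w) p v = fderiv ℝ (fun q => lam q v) p w

/-- The spun parameterization `F(p, u)` of `Σ_{S^m}L`: the `t`- and `x₂, y₂, …, z`-
coordinates of `f` are kept, while `(x₁, y₁)` is replaced by the `m+1` pairs
`(x₁ c_k, y₁ c_k)`. -/
noncomputable def spunCobordismMap (n m : ℕ) (hn : 1 ≤ n) {P Q : Type}
    (f : P → ℝ × (Fin (2 * n + 1) → ℝ)) (c : Q → Fin (m + 1) → ℝ) (pq : P × Q) :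
    ℝ × (Fin (2 * (n + m) + 1) → ℝ) :=
  ((f pq.1).1, fun i =>
    if h : (i : ℕ) < 2 * (m + 1) then
      (if (i : ℕ) % 2 = 0 then
        (f pq.1).2 ⟨0, by omega⟩ * c pq.2 ⟨(i : ℕ) / 2, by omega⟩
      else
        (f pq.1).2 ⟨1, by omega⟩ * c pq.2 ⟨(i : ℕ) / 2, by omega⟩)
    else (f pq.1).2 ⟨(i : ℕ) - 2 * m, by have := i.isLt; omega⟩)

open ContinuousLinearMap in
private lemma fderiv_comp_fst_aux {P Q : Type} [NormedAddCommGroup P] [NormedSpace ℝ P]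
    [NormedAddCommGroup Q] [NormedSpace ℝ Q] (g : P → ℝ) (pq : P × Q) :
    fderiv ℝ (fun x : P × Q => g x.1) pq = (fderiv ℝ g pq.1).comp (fst ℝ P Q) := by
  by_cases h : DifferentiableAt ℝ g pq.1
  · have e : (fun x : P × Q => g x.1) = g ∘ Prod.fst := rfl
    rw [e, fderiv_comp pq h differentiableAt_fst, fderiv_fst]
  · have h3 : DifferentiableAt ℝ (fun p : P => (p, pq.2)) pq.1 :=
      differentiableAt_id.prodMk (differentiableAt_const _)
    have h2 : ¬ DifferentiableAt ℝ (fun x : P × Q => g x.1) pq := by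
      intro h2
      have h2' : DifferentiableAt ℝ (fun x : P × Q => g x.1) (pq.1, pq.2) := by
        rw [Prod.mk.eta]; exact h2
      exact h (by have := h2'.comp pq.1 h3; exact this)
    rw [fderiv_zero_of_not_differentiableAt h, fderiv_zero_of_not_differentiableAt h2,
      zero_comp]

private lemma sphere_deriv_aux {Q : Type} [NormedAddCommGroup Q] [NormedSpace ℝ Q]
    {m : ℕ} (c : Q → Fin (m + 1) → ℝ) (hc : Differentiable ℝ c)
    (hcsum : ∀ q, ∑ k, (c q k) ^ 2 = 1) (q : Q) (w : Q) :
    ∑ k, c q k * (fderiv ℝ c q w k) = 0 := by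
  set dc := fderiv ℝ c q with hdc
  have hk : ∀ k : Fin (m + 1), HasFDerivAt (fun q' => c q' k)
      ((ContinuousLinearMap.proj k).comp dc) q :=
    fun k => by
      have := (ContinuousLinearMap.proj (R := ℝ) (φ := fun _ : Fin (m+1) => ℝ) k).hasFDerivAt.comp
        q (hc q).hasFDerivAt
      exact this
  have h1 : HasFDerivAt (fun q' => ∑ k, (c q' k) ^ 2)
      (∑ k : Fin (m + 1), ((2 * c q k) • ((ContinuousLinearMap.proj k).comp dc))) q := by
    apply HasFDerivAt.fun_sum
    intro k _
    have := (hk k).fun_mul (hk k)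
    have e : (fun q' => (c q' k) ^ 2) = fun q' => c q' k * c q' k := by
      funext q'; ring
    rw [e]
    convert this using 1
    ext z
    simp [two_mul]
    ring
    rw [mul_two, add_smul]
  have e2 : (fun q' => ∑ k, (c q' k) ^ 2) = fun _ : Q => (1 : ℝ) := funext hcsum
  rw [e2] at h1
  have h3 := h1.unique (hasFDerivAt_const 1 q)
  have h4 := congrArg (fun L : Q →L[ℝ] ℝ => L w) h3
  simp only [ContinuousLinearMap.coe_sum', Finset.sum_apply, ContinuousLinearMap.smul_apply,
    ContinuousLinearMap.comp_apply, ContinuousLinearMap.proj_apply, smul_eq_mul,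
    ContinuousLinearMap.zero_apply] at h4
  have h5 : (2 : ℝ) * ∑ k, c q k * dc w k = 0 := by
    rw [Finset.mul_sum]
    rw [← h4]
    apply Finset.sum_congr rfl
    intro k _
    ring
  linarith

/-- explicit coordinate derivatives of the spun map -/
private noncomputable def spunDco (n m : ℕ) (hn : 1 ≤ n) {P Q : Type}
    [NormedAddCommGroup P] [NormedSpace ℝ P] [NormedAddCommGroup Q] [NormedSpace ℝ Q]
    (x1 y1 : ℝ) (cq : Fin (m + 1) → ℝ)
    (df : P →L[ℝ] ℝ × (Fin (2 * n + 1) → ℝ)) (dc : Q →L[ℝ] (Fin (m + 1) → ℝ))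
    (j : Fin (2 * (n + m) + 1)) : (P × Q) →L[ℝ] ℝ :=
  if h : (j : ℕ) < 2 * (m + 1) then
    (if (j : ℕ) % 2 = 0 then
      x1 • ((ContinuousLinearMap.proj (⟨(j : ℕ) / 2, by omega⟩ : Fin (m + 1))).comp
          (dc.comp (ContinuousLinearMap.snd ℝ P Q)))
        + cq ⟨(j : ℕ) / 2, by omega⟩ •
          ((coordProj (2 * n + 1) ⟨0, by omega⟩).comp
            (df.comp (ContinuousLinearMap.fst ℝ P Q)))
    else
      y1 • ((ContinuousLinearMap.proj (⟨(j : ℕ) / 2, by omega⟩ : Fin (m + 1))).comp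
          (dc.comp (ContinuousLinearMap.snd ℝ P Q)))
        + cq ⟨(j : ℕ) / 2, by omega⟩ •
          ((coordProj (2 * n + 1) ⟨1, by omega⟩).comp
            (df.comp (ContinuousLinearMap.fst ℝ P Q))))
  else
    (coordProj (2 * n + 1) ⟨(j : ℕ) - 2 * m, by have := j.isLt; omega⟩).comp
      (df.comp (ContinuousLinearMap.fst ℝ P Q))

private lemma spun_hasFDerivAt (n m : ℕ) (hn : 1 ≤ n) {P Q : Type}
    [NormedAddCommGroup P] [NormedSpace ℝ P] [NormedAddCommGroup Q] [NormedSpace ℝ Q]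
    (f : P → ℝ × (Fin (2 * n + 1) → ℝ)) (hf : Differentiable ℝ f)
    (c : Q → Fin (m + 1) → ℝ) (hc : Differentiable ℝ c) (p : P) (q : Q) :
    HasFDerivAt (spunCobordismMap n m hn f c)
      (((tProj (2 * n + 1)).comp
          ((fderiv ℝ f p).comp (ContinuousLinearMap.fst ℝ P Q))).prod
        (ContinuousLinearMap.pi
          (spunDco n m hn ((f p).2 ⟨0, by omega⟩) ((f p).2 ⟨1, by omega⟩) (c q)
            (fderiv ℝ f p) (fderiv ℝ c q)))) (p, q) := by
  set df := fderiv ℝ f p with hdf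
  set dc := fderiv ℝ c q with hdc
  have hfst : HasFDerivAt (f ∘ Prod.fst) (df.comp (ContinuousLinearMap.fst ℝ P Q)) (p, q) :=
    (hf p).hasFDerivAt.comp (p, q) hasFDerivAt_fst
  have hcsnd : HasFDerivAt (c ∘ Prod.snd) (dc.comp (ContinuousLinearMap.snd ℝ P Q)) (p, q) :=
    (hc q).hasFDerivAt.comp (p, q) hasFDerivAt_snd
  refine HasFDerivAt.prodMk ?_ (hasFDerivAt_pi.2 fun j => ?_)
  · have := (tProj (2 * n + 1)).hasFDerivAt.comp (p, q) hfst
    exact this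
  · have hA : ∀ (k : ℕ) (hk : k < 2 * n + 1), HasFDerivAt (fun x : P × Q => (f x.1).2 ⟨k, hk⟩)
        ((coordProj (2 * n + 1) ⟨k, hk⟩).comp
          (df.comp (ContinuousLinearMap.fst ℝ P Q))) (p, q) := by
      intro k hk
      have := (coordProj (2 * n + 1) ⟨k, hk⟩).hasFDerivAt.comp (p, q) hfst
      exact this
    have hB : ∀ k : Fin (m + 1), HasFDerivAt (fun x : P × Q => c x.2 k)
        ((ContinuousLinearMap.proj k).comp
          (dc.comp (ContinuousLinearMap.snd ℝ P Q))) (p, q) := by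
      intro k
      have := (ContinuousLinearMap.proj (R := ℝ) (φ := fun _ : Fin (m + 1) => ℝ) k).hasFDerivAt.comp
        (p, q) hcsnd
      exact this
    rcases Nat.lt_or_ge (j : ℕ) (2 * (m + 1)) with h | h
    · rcases Nat.even_or_odd (j : ℕ) with he | ho
      · have he' : (j : ℕ) % 2 = 0 := Nat.even_iff.1 he
        simp only [spunDco, dif_pos h, if_pos he']
        have := (hA 0 (by omega)).fun_mul (hB ⟨(j : ℕ) / 2, by omega⟩)
        convert this using 2
      · have ho' : ¬ ((j : ℕ) % 2 = 0) := by
          rcases ho with ⟨t, ht⟩; omega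
        simp only [spunDco, dif_pos h, if_neg ho']
        have := (hA 1 (by omega)).fun_mul (hB ⟨(j : ℕ) / 2, by omega⟩)
        convert this using 2
    · have h' : ¬ ((j : ℕ) < 2 * (m + 1)) := by omega
      simp only [spunDco, dif_neg h']
      have := hA ((j : ℕ) - 2 * m) (by have := j.isLt; omega)
      convert this using 2

private lemma spunDco_apply_high (n m : ℕ) (hn : 1 ≤ n) {P Q : Type}
    [NormedAddCommGroup P] [NormedSpace ℝ P] [NormedAddCommGroup Q] [NormedSpace ℝ Q]
    (x1 y1 : ℝ) (cq : Fin (m + 1) → ℝ)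
    (df : P →L[ℝ] ℝ × (Fin (2 * n + 1) → ℝ)) (dc : Q →L[ℝ] (Fin (m + 1) → ℝ))
    (j : Fin (2 * (n + m) + 1)) (h : ¬ (j : ℕ) < 2 * (m + 1)) (vw : P × Q) :
    spunDco n m hn x1 y1 cq df dc j vw
      = (df vw.1).2 ⟨(j : ℕ) - 2 * m, by have := j.isLt; omega⟩ := by
  rw [spunDco, dif_neg h]
  simp [coordProj]

private lemma spunDco_apply_even (n m : ℕ) (hn : 1 ≤ n) {P Q : Type}
    [NormedAddCommGroup P] [NormedSpace ℝ P] [NormedAddCommGroup Q] [NormedSpace ℝ Q]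
    (x1 y1 : ℝ) (cq : Fin (m + 1) → ℝ)
    (df : P →L[ℝ] ℝ × (Fin (2 * n + 1) → ℝ)) (dc : Q →L[ℝ] (Fin (m + 1) → ℝ))
    (j : Fin (2 * (n + m) + 1)) (h : (j : ℕ) < 2 * (m + 1)) (he : (j : ℕ) % 2 = 0)
    (vw : P × Q) :
    spunDco n m hn x1 y1 cq df dc j vw
      = x1 * dc vw.2 ⟨(j : ℕ) / 2, by omega⟩
        + cq ⟨(j : ℕ) / 2, by omega⟩ * (df vw.1).2 ⟨0, by omega⟩ := by
  rw [spunDco, dif_pos h, if_pos he]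
  simp [coordProj]

private lemma spunDco_apply_odd (n m : ℕ) (hn : 1 ≤ n) {P Q : Type}
    [NormedAddCommGroup P] [NormedSpace ℝ P] [NormedAddCommGroup Q] [NormedSpace ℝ Q]
    (x1 y1 : ℝ) (cq : Fin (m + 1) → ℝ)
    (df : P →L[ℝ] ℝ × (Fin (2 * n + 1) → ℝ)) (dc : Q →L[ℝ] (Fin (m + 1) → ℝ))
    (j : Fin (2 * (n + m) + 1)) (h : (j : ℕ) < 2 * (m + 1)) (he : ¬ (j : ℕ) % 2 = 0)
    (vw : P × Q) :
    spunDco n m hn x1 y1 cq df dc j vw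
      = y1 * dc vw.2 ⟨(j : ℕ) / 2, by omega⟩
        + cq ⟨(j : ℕ) / 2, by omega⟩ * (df vw.1).2 ⟨1, by omega⟩ := by
  rw [spunDco, dif_pos h, if_neg he]
  simp [coordProj]

private lemma spun_coord_odd (n m : ℕ) (hn : 1 ≤ n) {P Q : Type}
    (f : P → ℝ × (Fin (2 * n + 1) → ℝ)) (c : Q → Fin (m + 1) → ℝ) (pq : P × Q)
    (j : Fin (2 * (n + m) + 1)) (h : (j : ℕ) < 2 * (m + 1)) (he : ¬ (j : ℕ) % 2 = 0) :
    (spunCobordismMap n m hn f c pq).2 j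
      = (f pq.1).2 ⟨1, by omega⟩ * c pq.2 ⟨(j : ℕ) / 2, by omega⟩ := by
  show (if h : (j : ℕ) < 2 * (m + 1) then _ else _) = _
  rw [dif_pos h, if_neg he]

private lemma spun_coord_high (n m : ℕ) (hn : 1 ≤ n) {P Q : Type}
    (f : P → ℝ × (Fin (2 * n + 1) → ℝ)) (c : Q → Fin (m + 1) → ℝ) (pq : P × Q)
    (j : Fin (2 * (n + m) + 1)) (h : ¬ (j : ℕ) < 2 * (m + 1)) :
    (spunCobordismMap n m hn f c pq).2 j
      = (f pq.1).2 ⟨(j : ℕ) - 2 * m, by have := j.isLt; omega⟩ := by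
  show (if h : (j : ℕ) < 2 * (m + 1) then _ else _) = _
  rw [dif_neg h]

private lemma spun_pullback_aux (n m : ℕ) (hn : 1 ≤ n) {P Q : Type}
    [NormedAddCommGroup P] [NormedSpace ℝ P] [NormedAddCommGroup Q] [NormedSpace ℝ Q]
    (f : P → ℝ × (Fin (2 * n + 1) → ℝ)) (hf : Differentiable ℝ f)
    (c : Q → Fin (m + 1) → ℝ) (hc : Differentiable ℝ c)
    (hcsum : ∀ q, ∑ k, (c q k) ^ 2 = 1) (p : P) (q : Q) :
    pullbackOneForm (spunCobordismMap n m hn f c) (symplPrimitive (n + m)) (p, q)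
      = (pullbackOneForm f (symplPrimitive n) p).comp (ContinuousLinearMap.fst ℝ P Q) := by
  obtain ⟨n', rfl⟩ : ∃ n', n = n' + 1 := ⟨n - 1, by omega⟩
  refine ContinuousLinearMap.ext fun vw => ?_
  obtain ⟨v, w⟩ := vw
  rw [pullbackOneForm, pullbackOneForm,
    (spun_hasFDerivAt (n' + 1) m hn f hf c hc p q).fderiv]
  simp only [symplPrimitive, ContinuousLinearMap.comp_apply, ContinuousLinearMap.smul_apply,
    ContinuousLinearMap.sub_apply, ContinuousLinearMap.coe_sum', Finset.sum_apply,
    ContinuousLinearMap.prod_apply, ContinuousLinearMap.pi_apply, coordProj, tProj,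
    ContinuousLinearMap.proj_apply,
    smul_eq_mul, ContinuousLinearMap.coe_fst', ContinuousLinearMap.coe_snd']
  rw [show (spunCobordismMap (n' + 1) m hn f c (p, q)).1 = (f p).1 from rfl]
  congr 1
  congr 1
  · rw [spunDco_apply_high (n' + 1) m hn ((f p).2 ⟨0, by omega⟩) ((f p).2 ⟨1, by omega⟩)
        (c q) (fderiv ℝ f p) (fderiv ℝ c q) ⟨2 * ((n' + 1) + m), by omega⟩
        (show ¬ (2 * ((n' + 1) + m)) < 2 * (m + 1) by omega) (v, w)]
    exact congrArg (fun i : Fin (2 * (n' + 1) + 1) => ((fderiv ℝ f p) v).2 i)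
      (Fin.ext (show 2 * (n' + 1 + m) - 2 * m = 2 * (n' + 1) by omega))
  · -- the sums
    set g : ℕ → ℝ := fun i =>
      (if h1 : 2 * i + 1 < 2 * ((n' + 1) + m) + 1 then
        (spunCobordismMap (n' + 1) m hn f c (p, q)).2 ⟨2 * i + 1, h1⟩ else 0) *
      (if h2 : 2 * i < 2 * ((n' + 1) + m) + 1 then
        (spunDco (n' + 1) m hn ((f p).2 ⟨0, by omega⟩) ((f p).2 ⟨1, by omega⟩) (c q)
          (fderiv ℝ f p) (fderiv ℝ c q) ⟨2 * i, h2⟩) (v, w) else 0) with hg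
    set g' : ℕ → ℝ := fun i =>
      (if h1 : 2 * i + 1 < 2 * (n' + 1) + 1 then (f p).2 ⟨2 * i + 1, h1⟩ else 0) *
      (if h2 : 2 * i < 2 * (n' + 1) + 1 then ((fderiv ℝ f p) v).2 ⟨2 * i, h2⟩ else 0)
      with hg'
    have term_eq : ∀ (x : Fin (n' + 1 + m)) (h1 : 2 * (x : ℕ) + 1 < 2 * ((n' + 1) + m) + 1)
        (h2 : 2 * (x : ℕ) < 2 * ((n' + 1) + m) + 1),
        (spunCobordismMap (n' + 1) m hn f c (p, q)).2 ⟨2 * (x : ℕ) + 1, h1⟩ *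
          (spunDco (n' + 1) m hn ((f p).2 ⟨0, by omega⟩) ((f p).2 ⟨1, by omega⟩) (c q)
            (fderiv ℝ f p) (fderiv ℝ c q) ⟨2 * (x : ℕ), h2⟩) (v, w) = g (x : ℕ) := by
      intro x h1 h2
      rw [hg]
      simp only [dif_pos h1, dif_pos h2]
    have term_eq' : ∀ (x : Fin (n' + 1)) (h1 : 2 * (x : ℕ) + 1 < 2 * (n' + 1) + 1)
        (h2 : 2 * (x : ℕ) < 2 * (n' + 1) + 1),
        (f p).2 ⟨2 * (x : ℕ) + 1, h1⟩ * ((fderiv ℝ f p) v).2 ⟨2 * (x : ℕ), h2⟩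
          = g' (x : ℕ) := by
      intro x h1 h2
      rw [hg']
      simp only [dif_pos h1, dif_pos h2]
    simp only [term_eq, term_eq']
    rw [Fin.sum_univ_eq_sum_range g (n' + 1 + m), Fin.sum_univ_eq_sum_range g' (n' + 1)]
    rw [show n' + 1 + m = m + 1 + n' from by omega, Finset.sum_range_add,
      Finset.sum_range_succ' g' n']
    have hdc0 := sphere_deriv_aux c hc hcsum q w
    have tail : ∀ i ∈ Finset.range n', g (m + 1 + i) = g' (i + 1) := by
      intro i hi
      rw [Finset.mem_range] at hi
      rw [hg, hg']
      dsimp only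
      rw [dif_pos (show 2 * (m + 1 + i) + 1 < 2 * (n' + 1 + m) + 1 by omega),
        dif_pos (show 2 * (m + 1 + i) < 2 * (n' + 1 + m) + 1 by omega),
        dif_pos (show 2 * (i + 1) + 1 < 2 * (n' + 1) + 1 by omega),
        dif_pos (show 2 * (i + 1) < 2 * (n' + 1) + 1 by omega)]
      rw [spun_coord_high (n' + 1) m hn f c (p, q) ⟨2 * (m + 1 + i) + 1, by omega⟩
          (show ¬ (2 * (m + 1 + i) + 1) < 2 * (m + 1) by omega),
        spunDco_apply_high (n' + 1) m hn ((f p).2 ⟨0, by omega⟩) ((f p).2 ⟨1, by omega⟩)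
          (c q) (fderiv ℝ f p) (fderiv ℝ c q) ⟨2 * (m + 1 + i), by omega⟩
          (show ¬ (2 * (m + 1 + i)) < 2 * (m + 1) by omega) (v, w)]
      simp only [Fin.val_mk, show 2 * (m + 1 + i) + 1 - 2 * m = 2 * (i + 1) + 1 from by omega,
        show 2 * (m + 1 + i) - 2 * m = 2 * (i + 1) from by omega]
    have hterm : ∀ x : Fin (m + 1), g (x : ℕ)
        = ((f p).2 ⟨1, by omega⟩ * c q x) *
          ((f p).2 ⟨0, by omega⟩ * (fderiv ℝ c q) w x
            + c q x * ((fderiv ℝ f p) v).2 ⟨0, by omega⟩) := by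
      intro x
      have hx := x.isLt
      rw [hg]
      dsimp only
      rw [dif_pos (show 2 * (x : ℕ) + 1 < 2 * (n' + 1 + m) + 1 by omega),
        dif_pos (show 2 * (x : ℕ) < 2 * (n' + 1 + m) + 1 by omega)]
      rw [spun_coord_odd (n' + 1) m hn f c (p, q) ⟨2 * (x : ℕ) + 1, by omega⟩
          (show (2 * (x : ℕ) + 1) < 2 * (m + 1) by omega)
          (show ¬ (2 * (x : ℕ) + 1) % 2 = 0 by omega),
        spunDco_apply_even (n' + 1) m hn ((f p).2 ⟨0, by omega⟩) ((f p).2 ⟨1, by omega⟩)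
          (c q) (fderiv ℝ f p) (fderiv ℝ c q) ⟨2 * (x : ℕ), by omega⟩
          (show (2 * (x : ℕ)) < 2 * (m + 1) by omega)
          (show (2 * (x : ℕ)) % 2 = 0 by omega) (v, w)]
      simp only [Fin.val_mk, show (2 * (x : ℕ) + 1) / 2 = (x : ℕ) from by omega,
        show 2 * (x : ℕ) / 2 = (x : ℕ) from by omega, Fin.eta]
    have head : ∑ i ∈ Finset.range (m + 1), g i
        = (f p).2 ⟨1, by omega⟩ * ((fderiv ℝ f p) v).2 ⟨0, by omega⟩ := by
      calc ∑ i ∈ Finset.range (m + 1), g i = ∑ x : Fin (m + 1), g (x : ℕ) :=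
            (Fin.sum_univ_eq_sum_range g (m + 1)).symm
        _ = ∑ x : Fin (m + 1), ((f p).2 ⟨1, by omega⟩ * c q x) *
              ((f p).2 ⟨0, by omega⟩ * (fderiv ℝ c q) w x
                + c q x * ((fderiv ℝ f p) v).2 ⟨0, by omega⟩) :=
            Finset.sum_congr rfl fun x _ => hterm x
        _ = ((f p).2 ⟨0, by omega⟩ * (f p).2 ⟨1, by omega⟩) *
              (∑ x : Fin (m + 1), c q x * (fderiv ℝ c q) w x)
            + ((f p).2 ⟨1, by omega⟩ * ((fderiv ℝ f p) v).2 ⟨0, by omega⟩) *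
              (∑ x : Fin (m + 1), c q x ^ 2) := by
            rw [Finset.mul_sum, Finset.mul_sum, ← Finset.sum_add_distrib]
            exact Finset.sum_congr rfl fun x _ => by ring
        _ = (f p).2 ⟨1, by omega⟩ * ((fderiv ℝ f p) v).2 ⟨0, by omega⟩ := by
            rw [hdc0, hcsum q, mul_zero, mul_one, zero_add]
    have hg'0 : g' 0 = (f p).2 ⟨1, by omega⟩ * ((fderiv ℝ f p) v).2 ⟨0, by omega⟩ := by
      rw [hg']
      dsimp only
      rw [dif_pos (show 2 * 0 + 1 < 2 * (n' + 1) + 1 by omega),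
        dif_pos (show 2 * 0 < 2 * (n' + 1) + 1 by omega)]
    rw [Finset.sum_congr rfl tail, head, hg'0, add_comm]

/-- The Lagrangian condition is preserved by `S^m`-spinning: if the smooth embedding
`f_L : P → ℝ × ℝ^{2n+1}` with `x₁ > 0` pulls back the symplectic form
`d(e^t(dz − ∑ y_i dx_i))` to zero, and `c : Q → ℝ^{m+1}` is a smooth parameterization of
the unit sphere `S^m` (so `∑_k c_k² = 1`), then the spun map `F` pulls back the symplectic
form `d(e^t(dz − ∑ ỹ dx̃))` on `ℝ × ℝ^{2(n+m)+1}` to zero. -/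
theorem spun_cobordism_lagrangian (n m : ℕ) (hn : 1 ≤ n) (hm : 1 ≤ m)
    {P Q : Type} [NormedAddCommGroup P] [NormedSpace ℝ P]
    [NormedAddCommGroup Q] [NormedSpace ℝ Q]
    (f : P → ℝ × (Fin (2 * n + 1) → ℝ)) (hf : ContDiff ℝ (⊤ : ℕ∞) f)
    (hinj : Function.Injective f)
    (hx : ∀ p, 0 < (f p).2 ⟨0, by omega⟩)
    (c : Q → Fin (m + 1) → ℝ) (hc : ContDiff ℝ (⊤ : ℕ∞) c)
    (hcsum : ∀ q, ∑ k, (c q k) ^ 2 = 1)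
    (hclosed : HasZeroExtDeriv (pullbackOneForm f (symplPrimitive n))) :
    HasZeroExtDeriv
      (pullbackOneForm (spunCobordismMap n m hn f c) (symplPrimitive (n + m))) := by
  have hfd : Differentiable ℝ f := hf.differentiable (by simp)
  have hcd : Differentiable ℝ c := hc.differentiable (by simp)
  have key : ∀ x : P × Q,
      pullbackOneForm (spunCobordismMap n m hn f c) (symplPrimitive (n + m)) x
        = (pullbackOneForm f (symplPrimitive n) x.1).comp (ContinuousLinearMap.fst ℝ P Q) :=
    fun x => spun_pullback_aux n m hn f hfd c hcd hcsum x.1 x.2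
  intro pq vw1 vw2
  have e : ∀ u : P × Q,
      (fun x : P × Q =>
        pullbackOneForm (spunCobordismMap n m hn f c) (symplPrimitive (n + m)) x u)
        = fun x : P × Q => pullbackOneForm f (symplPrimitive n) x.1 u.1 := by
    intro u
    funext x
    rw [key x]
    rfl
  rw [e vw2, e vw1,
    fderiv_comp_fst_aux (fun p' => pullbackOneForm f (symplPrimitive n) p' vw2.1) pq,
    fderiv_comp_fst_aux (fun p' => pullbackOneForm f (symplPrimitive n) p' vw1.1) pq]
  simp only [ContinuousLinearMap.comp_apply, ContinuousLinearMap.coe_fst']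
  exact hclosed pq.1 vw1.1 vw2.1
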